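/- arXiv:1704.07440 — 2 statements merged into one kernel-verified Lean document; each statement's English description precedes it below -/
import Mathlib

section
/- The power series η₁(q) = q ∏_{n≥1}(1 - q^{24n}) satisfies η₁(q) = ∑_{n ∈ ℤ} (-1)^n q^{(6n+1)²} as formal power series. -/
open Finset

lemma gauss_Icc (a t : ℕ) : (∑ i ∈ Finset.Icc a (a + t), i) * 2 = (2*a + t) * (t + 1) := by
  induction t with
  | zero => simp [mul_comm]
  | succ t ih =>
    rw [show a + (t+1) = (a+t) + 1 from rfl,
      Finset.sum_Icc_succ_top (show a ≤ a + t + 1 by omega), add_mul, ih]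
    ring

lemma sum_Icc_low (k : ℕ) (hk : 1 ≤ k) : (∑ i ∈ Finset.Icc k (2*k-1), i) * 2 = k*(3*k-1) := by
  obtain ⟨k, rfl⟩ := Nat.exists_eq_add_of_le hk
  have h : 2*(1+k)-1 = (1+k) + k := by omega
  rw [h, gauss_Icc]
  have : 3*(1+k)-1 = 2+3*k := by omega
  rw [this]; ring

lemma sum_Icc_high (k : ℕ) : (∑ i ∈ Finset.Icc (k+1) (2*k), i) * 2 = k*(3*k+1) := by
  cases k with
  | zero => simp
  | succ k =>
    have h : 2*(k+1) = (k+2) + k := by omega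
    rw [h, gauss_Icc]
    ring

noncomputable section

/-- least `b` such that `Icc b (max S) ⊆ S` (the bottom of the top run). -/
def runMin (S : Finset ℕ) (h : S.Nonempty) : ℕ :=
  Nat.find (p := fun b => Finset.Icc b (S.max' h) ⊆ S)
    ⟨S.max' h, by simp [Finset.Icc_self, Finset.singleton_subset_iff, S.max'_mem h]⟩

lemma runMin_subset (S : Finset ℕ) (h : S.Nonempty) :
    Finset.Icc (runMin S h) (S.max' h) ⊆ S :=
  Nat.find_spec (p := fun b => Finset.Icc b (S.max' h) ⊆ S) _

lemma runMin_le (S : Finset ℕ) (h : S.Nonempty) {c : ℕ}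
    (hc : Finset.Icc c (S.max' h) ⊆ S) : runMin S h ≤ c :=
  Nat.find_le (p := fun b => Finset.Icc b (S.max' h) ⊆ S) hc

lemma runMin_mem (S : Finset ℕ) (h : S.Nonempty) : runMin S h ∈ S := by
  apply runMin_subset S h
  simp only [Finset.mem_Icc, le_refl, true_and]
  exact Nat.le_of_lt_succ (Nat.lt_succ_of_le (Nat.find_le (by
    simp [Finset.Icc_self, Finset.singleton_subset_iff, S.max'_mem h])))

lemma runMin_pos (S : Finset ℕ) (h : S.Nonempty) (h0 : 0 ∉ S) : 1 ≤ runMin S h :=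
  Nat.one_le_iff_ne_zero.mpr fun hz => h0 (hz ▸ runMin_mem S h)

lemma runMin_pred_not_mem (S : Finset ℕ) (h : S.Nonempty) (h0 : 0 ∉ S) :
    runMin S h - 1 ∉ S := by
  intro hmem
  have hb1 := runMin_pos S h h0
  have hlt : runMin S h - 1 < runMin S h := by omega
  apply Nat.find_min (p := fun b => Finset.Icc b (S.max' h) ⊆ S) _ hlt
  intro x hx
  rcases Nat.eq_or_lt_of_le (Finset.mem_Icc.mp hx).1 with heq | hlt'
  · exact heq ▸ hmem
  · exact runMin_subset S h (Finset.mem_Icc.mpr ⟨by omega, (Finset.mem_Icc.mp hx).2⟩)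

lemma runMin_le_max (S : Finset ℕ) (h : S.Nonempty) : runMin S h ≤ S.max' h :=
  S.le_max' _ (runMin_mem S h)

/-- Franklin's involution. -/
def fmap (S : Finset ℕ) : Finset ℕ :=
  if h : S.Nonempty then
    let a := S.max' h
    let s := S.min' h
    let d := a + 1 - runMin S h
    if s ≤ d then (S.erase s).image (fun x => if a - s < x then x + 1 else x)
    else insert d (S.image (fun x => if a - d < x then x - 1 else x))
  else ∅

/-- exceptional sets -/
def excep (S : Finset ℕ) : Prop :=
  S = ∅ ∨ ∃ k, 1 ≤ k ∧ (S = Finset.Icc k (2*k-1) ∨ S = Finset.Icc (k+1) (2*k))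

end

lemma runMin_eq (S : Finset ℕ) (h : S.Nonempty) {c : ℕ}
    (hc1 : Finset.Icc c (S.max' h) ⊆ S) (hc2 : c - 1 ∉ S) (hc3 : 1 ≤ c)
    (hc4 : c ≤ S.max' h + 1) : runMin S h = c := by
  refine le_antisymm (runMin_le S h hc1) ?_
  by_contra hlt
  push_neg at hlt
  exact hc2 (runMin_subset S h (Finset.mem_Icc.mpr ⟨by omega, by omega⟩))

lemma fmap_of_caseA (S : Finset ℕ) (h : S.Nonempty)
    (hcond : S.min' h ≤ S.max' h + 1 - runMin S h) :
    fmap S = (S.erase (S.min' h)).image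
      (fun x => if S.max' h - S.min' h < x then x + 1 else x) := by
  rw [fmap, dif_pos h]
  simp only [if_pos hcond]

lemma fmap_of_caseB (S : Finset ℕ) (h : S.Nonempty)
    (hcond : ¬ (S.min' h ≤ S.max' h + 1 - runMin S h)) :
    fmap S = insert (S.max' h + 1 - runMin S h)
      (S.image (fun x => if S.max' h - (S.max' h + 1 - runMin S h) < x then x - 1 else x)) := by
  rw [fmap, dif_pos h]
  simp only [if_neg hcond]

lemma franklin_caseA (S : Finset ℕ) (h : S.Nonempty) (h0 : 0 ∉ S)
    (hexc : ¬ excep S) (hcond : S.min' h ≤ S.max' h + 1 - runMin S h) :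
    0 ∉ fmap S ∧ (fmap S).Nonempty ∧ ¬ excep (fmap S) ∧
      (fmap S).sum id = S.sum id ∧ (fmap S).card + 1 = S.card ∧ fmap (fmap S) = S := by
  set a := S.max' h with ha_def
  set s := S.min' h with hs_def
  set b := runMin S h with hb_def
  have hb1 : 1 ≤ b := runMin_pos S h h0
  have hba : b ≤ a := runMin_le_max S h
  have hsb : s ≤ b := S.min'_le _ (runMin_mem S h)
  have run : Finset.Icc b a ⊆ S := runMin_subset S h
  have hs1 : 1 ≤ s := by
    have := S.min'_mem h
    rcases Nat.eq_zero_or_pos s with h' | h'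
    · exact absurd (h' ▸ this) h0
    · exact h'
  have hSle : ∀ x ∈ S, x ≤ a := fun x hx => S.le_max' x hx
  have hSge : ∀ x ∈ S, s ≤ x := fun x hx => S.min'_le x hx
  have hsd : s + b ≤ a + 1 := by omega
  -- S has at least 2 elements
  have hcard : 2 ≤ S.card := by
    by_contra hc
    have hc1 : S.card = 1 := by
      have := Finset.card_pos.mpr h; omega
    obtain ⟨x, hx⟩ := Finset.card_eq_one.mp hc1
    have hxa : a = x := Finset.mem_singleton.mp (by rw [← hx]; exact S.max'_mem h)
    have hxs : s = x := Finset.mem_singleton.mp (by rw [← hx]; exact S.min'_mem h)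
    have hxb : b = x := Finset.mem_singleton.mp (by rw [← hx]; exact runMin_mem S h)
    have hx1 : x = 1 := by omega
    exact hexc (Or.inr ⟨1, le_refl 1, Or.inl (by rw [hx, hx1]; decide)⟩)
  have hsma : s < a := Finset.min'_lt_max'_of_card S (by omega)
  -- key inequality 2s ≤ a
  have hsa : 2 * s ≤ a := by
    by_contra h2
    push_neg at h2
    have hbs : b = s := by omega
    have hA : a = 2 * s - 1 := by omega
    have hSIcc : S = Finset.Icc s (2 * s - 1) := by
      apply subset_antisymm
      · intro x hx
        exact Finset.mem_Icc.mpr ⟨hSge x hx, by have := hSle x hx; omega⟩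
      · intro x hx
        exact run (by rw [hbs, hA]; exact hx)
    exact hexc (Or.inr ⟨s, hs1, Or.inl hSIcc⟩)
  set up : ℕ → ℕ := fun x => if a - s < x then x + 1 else x with hup_def
  have hupinj : Function.Injective up := by
    intro x y hxy
    simp only [hup_def] at hxy
    split_ifs at hxy <;> omega
  have hT : fmap S = (S.erase s).image up := fmap_of_caseA S h hcond
  set T := (S.erase s).image up with hT_def
  have hmem_top : ∀ x, a - s < x → x ≤ a → x ∈ S := fun x h1 h2 =>
    run (Finset.mem_Icc.mpr ⟨by omega, h2⟩)
  -- memberships in T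
  have key1 : a + 1 ∈ T := by
    refine Finset.mem_image.mpr ⟨a, Finset.mem_erase.mpr ⟨by omega, S.max'_mem h⟩, ?_⟩
    simp only [hup_def, if_pos (show a - s < a by omega)]
  have key2 : ∀ y ∈ T, y ≤ a + 1 := by
    intro y hy
    obtain ⟨x, hx, rfl⟩ := Finset.mem_image.mp hy
    have := hSle x (Finset.mem_of_mem_erase hx)
    simp only [hup_def]
    split_ifs <;> omega
  have key3 : a + 1 - s ∉ T := by
    intro hy
    obtain ⟨x, hx, hux⟩ := Finset.mem_image.mp hy
    have hxs := (Finset.mem_erase.mp hx).1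
    have hxS := Finset.mem_of_mem_erase hx
    have := hSge x hxS
    simp only [hup_def] at hux
    split_ifs at hux <;> omega
  have key4 : Finset.Icc (a + 2 - s) (a + 1) ⊆ T := by
    intro y hy
    rw [Finset.mem_Icc] at hy
    refine Finset.mem_image.mpr ⟨y - 1, Finset.mem_erase.mpr ⟨by omega,
      hmem_top (y - 1) (by omega) (by omega)⟩, ?_⟩
    simp only [hup_def, if_pos (show a - s < y - 1 by omega)]
    omega
  have key5 : ∀ y ∈ T, s + 1 ≤ y := by
    intro y hy
    obtain ⟨x, hx, rfl⟩ := Finset.mem_image.mp hy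
    have hxs := (Finset.mem_erase.mp hx).1
    have := hSge x (Finset.mem_of_mem_erase hx)
    simp only [hup_def]
    split_ifs <;> omega
  have hTne : T.Nonempty := ⟨a + 1, key1⟩
  have hT0 : 0 ∉ T := fun hc => by have := key5 0 hc; omega
  have hTmax : T.max' hTne = a + 1 :=
    le_antisymm (Finset.max'_le _ _ _ key2) (Finset.le_max' _ _ key1)
  have hTrun : runMin T hTne = a + 2 - s := by
    refine runMin_eq T hTne ?_ ?_ (by omega) (by omega)
    · rw [hTmax]; exact key4
    · rw [show a + 2 - s - 1 = a + 1 - s by omega]; exact key3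
  have hTmin : s + 1 ≤ T.min' hTne := key5 _ (T.min'_mem hTne)
  have hcondT : ¬ (T.min' hTne ≤ T.max' hTne + 1 - runMin T hTne) := by
    rw [hTmax, hTrun]; omega
  -- sum
  have hsum : T.sum id = S.sum id := by
    have h1 : T.sum id = ∑ x ∈ S.erase s, up x :=
      Finset.sum_image (fun x _ y _ hxy => hupinj hxy)
    have h2 : ∀ x ∈ S.erase s, up x = x + (if a - s < x then 1 else 0) := by
      intro x _; simp only [hup_def]; split_ifs <;> omega
    have h3 : (S.erase s).filter (fun x => a - s < x) = Finset.Icc (a + 1 - s) a := by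
      ext x
      simp only [Finset.mem_filter, Finset.mem_erase, Finset.mem_Icc]
      constructor
      · rintro ⟨⟨hne, hxS⟩, hgt⟩
        exact ⟨by omega, hSle x hxS⟩
      · rintro ⟨h1', h2'⟩
        exact ⟨⟨by omega, hmem_top x (by omega) h2'⟩, by omega⟩
    have h4 : S.sum id = s + (S.erase s).sum id :=
      (Finset.add_sum_erase S id (S.min'_mem h)).symm
    rw [h1, Finset.sum_congr rfl h2, Finset.sum_add_distrib, Finset.sum_boole, h3, h4]
    simp only [Nat.card_Icc]
    have : a + 1 - (a + 1 - s) = s := by omega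
    rw [this]
    simp [id]
    omega
  -- card
  have hcardT : T.card + 1 = S.card := by
    rw [hT_def, Finset.card_image_of_injective _ hupinj,
      Finset.card_erase_of_mem (S.min'_mem h)]
    omega
  -- not exceptional
  have hexcT : ¬ excep T := by
    rintro (he | ⟨k, hk1, hk2 | hk2⟩)
    · rw [he] at key1; exact absurd key1 (Finset.notMem_empty _)
    · have m1 := key1; rw [hk2] at m1; rw [Finset.mem_Icc] at m1
      have m2 := key2 (2 * k - 1) (by rw [hk2]; exact Finset.mem_Icc.mpr ⟨by omega, le_refl _⟩)
      have m3 := key4 (Finset.mem_Icc.mpr ⟨le_refl _, by omega⟩)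
      rw [hk2, Finset.mem_Icc] at m3
      have m4 : ¬ (k ≤ a + 1 - s ∧ a + 1 - s ≤ 2 * k - 1) := by
        intro hc
        exact key3 (by rw [hk2]; exact Finset.mem_Icc.mpr hc)
      omega
    · have m1 := key1; rw [hk2] at m1; rw [Finset.mem_Icc] at m1
      have m2 := key2 (2 * k) (by rw [hk2]; exact Finset.mem_Icc.mpr ⟨by omega, le_refl _⟩)
      have m3 := key4 (Finset.mem_Icc.mpr ⟨le_refl _, by omega⟩)
      rw [hk2, Finset.mem_Icc] at m3
      have m4 : ¬ (k + 1 ≤ a + 1 - s ∧ a + 1 - s ≤ 2 * k) := by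
        intro hc
        exact key3 (by rw [hk2]; exact Finset.mem_Icc.mpr hc)
      omega
  -- involution
  have hinv : fmap T = S := by
    rw [fmap_of_caseB T hTne hcondT, hTmax, hTrun,
      show a + 1 + 1 - (a + 2 - s) = s by omega,
      show a + 1 - s = a + 1 - s from rfl]
    have himg : T.image (fun x => if a + 1 - s < x then x - 1 else x) = S.erase s := by
      rw [hT_def, Finset.image_image]
      have : ∀ x ∈ S.erase s, ((fun x => if a + 1 - s < x then x - 1 else x) ∘ up) x = x := by
        intro x hx
        have := hSle x (Finset.mem_of_mem_erase hx)
        simp only [Function.comp, hup_def]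
        split_ifs <;> omega
      rw [Finset.image_congr this, Finset.image_id']
    rw [himg, Finset.insert_erase (S.min'_mem h)]
  rw [hT] at *
  exact ⟨hT0, hTne, hexcT, hsum, hcardT, hinv⟩

lemma franklin_caseB (S : Finset ℕ) (h : S.Nonempty) (h0 : 0 ∉ S)
    (hexc : ¬ excep S) (hcond : ¬ (S.min' h ≤ S.max' h + 1 - runMin S h)) :
    0 ∉ fmap S ∧ (fmap S).Nonempty ∧ ¬ excep (fmap S) ∧
      (fmap S).sum id = S.sum id ∧ S.card + 1 = (fmap S).card ∧ fmap (fmap S) = S := by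
  set a := S.max' h with ha_def
  set s := S.min' h with hs_def
  set b := runMin S h with hb_def
  set d := a + 1 - b with hd_def
  have hb1 : 1 ≤ b := runMin_pos S h h0
  have hba : b ≤ a := runMin_le_max S h
  have hsb : s ≤ b := S.min'_le _ (runMin_mem S h)
  have run : Finset.Icc b a ⊆ S := runMin_subset S h
  have hbp : b - 1 ∉ S := runMin_pred_not_mem S h h0
  have hs1 : 1 ≤ s := by
    have := S.min'_mem h
    rcases Nat.eq_zero_or_pos s with h' | h'
    · exact absurd (h' ▸ this) h0
    · exact h'
  have hSle : ∀ x ∈ S, x ≤ a := fun x hx => S.le_max' x hx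
  have hSge : ∀ x ∈ S, s ≤ x := fun x hx => S.min'_le x hx
  have hd1 : 1 ≤ d := by omega
  have hds : d + 1 ≤ s := by omega
  have hbd : b = a + 1 - d := by omega
  have hadS : a - d ∉ S := by
    have : a - d = b - 1 := by omega
    rwa [this]
  -- key inequality a ≥ 2d + 1
  have had : 2 * d + 1 ≤ a := by
    by_contra h2
    push_neg at h2
    have hbs : b = s := by omega
    have hA : a = 2 * d := by omega
    have hB : s = d + 1 := by omega
    have hSIcc : S = Finset.Icc (d + 1) (2 * d) := by
      apply subset_antisymm
      · intro x hx
        exact Finset.mem_Icc.mpr ⟨by have := hSge x hx; omega, by have := hSle x hx; omega⟩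
      · intro x hx
        exact run (by rw [hbs, hB, hA]; exact hx)
    exact hexc (Or.inr ⟨d, hd1, Or.inr hSIcc⟩)
  set down : ℕ → ℕ := fun x => if a - d < x then x - 1 else x with hdown_def
  have hT : fmap S = insert d (S.image down) := fmap_of_caseB S h hcond
  set T := insert d (S.image down) with hT_def
  have hdowninj : ∀ x ∈ S, ∀ y ∈ S, down x = down y → x = y := by
    intro x hx y hy hxy
    simp only [hdown_def] at hxy
    have h1 : x ≠ a - d := fun hc => hadS (hc ▸ hx)
    have h2 : y ≠ a - d := fun hc => hadS (hc ▸ hy)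
    have := hSge x hx
    have := hSge y hy
    split_ifs at hxy <;> omega
  have hd_notin : d ∉ S.image down := by
    intro hc
    obtain ⟨x, hx, hdx⟩ := Finset.mem_image.mp hc
    have := hSge x hx
    simp only [hdown_def] at hdx
    split_ifs at hdx <;> omega
  -- memberships in T
  have key1 : a - 1 ∈ T := by
    refine Finset.mem_insert.mpr (Or.inr (Finset.mem_image.mpr ⟨a, S.max'_mem h, ?_⟩))
    simp only [hdown_def, if_pos (show a - d < a by omega)]
  have key2 : ∀ y ∈ T, y ≤ a - 1 := by
    intro y hy
    rcases Finset.mem_insert.mp hy with rfl | hy'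
    · omega
    · obtain ⟨x, hx, rfl⟩ := Finset.mem_image.mp hy'
      have := hSle x hx
      have hxd : x ≠ a - d := fun hc => hadS (hc ▸ hx)
      simp only [hdown_def]
      split_ifs <;> omega
  have key5 : ∀ y ∈ T, d ≤ y := by
    intro y hy
    rcases Finset.mem_insert.mp hy with rfl | hy'
    · omega
    · obtain ⟨x, hx, rfl⟩ := Finset.mem_image.mp hy'
      have := hSge x hx
      simp only [hdown_def]
      split_ifs <;> omega
  have key4 : Finset.Icc (a - d) (a - 1) ⊆ T := by
    intro y hy
    rw [Finset.mem_Icc] at hy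
    refine Finset.mem_insert.mpr (Or.inr (Finset.mem_image.mpr ⟨y + 1,
      run (Finset.mem_Icc.mpr ⟨by omega, by omega⟩), ?_⟩))
    simp only [hdown_def, if_pos (show a - d < y + 1 by omega)]
    omega
  have hTne : T.Nonempty := ⟨d, Finset.mem_insert_self _ _⟩
  have hT0 : 0 ∉ T := fun hc => by have := key5 0 hc; omega
  have hTmax : T.max' hTne = a - 1 :=
    le_antisymm (Finset.max'_le _ _ _ key2) (Finset.le_max' _ _ key1)
  have hTmin : T.min' hTne = d :=
    le_antisymm (Finset.min'_le _ _ (Finset.mem_insert_self _ _))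
      (key5 _ (T.min'_mem hTne))
  have hTrun : runMin T hTne ≤ a - d := by
    apply runMin_le
    rw [hTmax]
    exact key4
  have hcondT : T.min' hTne ≤ T.max' hTne + 1 - runMin T hTne := by
    rw [hTmax, hTmin]
    omega
  -- sum
  have hsum : T.sum id = S.sum id := by
    have h1 : (S.image down).sum id = ∑ x ∈ S, down x := Finset.sum_image hdowninj
    have h2 : ∀ x ∈ S, down x + (if a - d < x then 1 else 0) = x := by
      intro x hx
      have := hSge x hx
      simp only [hdown_def]
      split_ifs <;> omega
    have h3 : S.filter (fun x => a - d < x) = Finset.Icc (a + 1 - d) a := by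
      ext x
      simp only [Finset.mem_filter, Finset.mem_Icc]
      constructor
      · rintro ⟨hxS, hgt⟩
        have hxd : x ≠ a - d := fun hc => hadS (hc ▸ hxS)
        exact ⟨by omega, hSle x hxS⟩
      · rintro ⟨h1', h2'⟩
        exact ⟨run (Finset.mem_Icc.mpr ⟨by omega, h2'⟩), by omega⟩
    have h4 : ∑ x ∈ S, down x + (∑ x ∈ S, if a - d < x then 1 else 0) = S.sum id := by
      rw [← Finset.sum_add_distrib]
      exact Finset.sum_congr rfl h2
    rw [Finset.sum_boole, h3] at h4
    simp only [Nat.card_Icc] at h4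
    have h5 : a + 1 - (a + 1 - d) = d := by omega
    rw [h5] at h4
    rw [hT_def, Finset.sum_insert hd_notin, h1]
    simp only [id, Nat.cast_id] at h4 ⊢
    omega
  -- card
  have hcardT : S.card + 1 = T.card := by
    rw [hT_def, Finset.card_insert_of_notMem hd_notin,
      Finset.card_image_of_injOn hdowninj]
  -- not exceptional
  have hexcT : ¬ excep T := by
    rintro (he | ⟨k, hk1, hk2 | hk2⟩)
    · rw [he] at key1; exact absurd key1 (Finset.notMem_empty _)
    · have m1 : d ∈ T := Finset.mem_insert_self _ _
      rw [hk2, Finset.mem_Icc] at m1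
      have m2 : k ∈ T := by rw [hk2]; exact Finset.mem_Icc.mpr ⟨le_refl _, by omega⟩
      have m3 := key5 k m2
      have m4 := key1
      rw [hk2, Finset.mem_Icc] at m4
      omega
    · have m1 : d ∈ T := Finset.mem_insert_self _ _
      rw [hk2, Finset.mem_Icc] at m1
      have m2 : k + 1 ∈ T := by rw [hk2]; exact Finset.mem_Icc.mpr ⟨le_refl _, by omega⟩
      have m3 := key5 (k + 1) m2
      have m4 := key1
      rw [hk2, Finset.mem_Icc] at m4
      omega
  -- involution
  have hinv : fmap T = S := by
    rw [fmap_of_caseA T hTne hcondT, hTmax, hTmin]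
    have herase : T.erase d = S.image down := by
      rw [hT_def, Finset.erase_insert hd_notin]
    rw [herase, Finset.image_image]
    have : ∀ x ∈ S, ((fun x => if a - 1 - d < x then x + 1 else x) ∘ down) x = x := by
      intro x hx
      have := hSge x hx
      have := hSle x hx
      have hxd : x ≠ a - d := fun hc => hadS (hc ▸ hx)
      simp only [Function.comp, hdown_def]
      split_ifs <;> omega
    rw [Finset.image_congr this, Finset.image_id']
  rw [hT] at *
  exact ⟨hT0, hTne, hexcT, hsum, hcardT, hinv⟩

lemma pent_unique {M : ℕ} {j j' : ℤ} (hj : j * (3 * j + 1) = 2 * (M : ℤ))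
    (hj' : j' * (3 * j' + 1) = 2 * (M : ℤ)) : j = j' := by
  have h3 : (j - j') * (3 * (j + j') + 1) = 0 := by linear_combination hj - hj'
  rcases mul_eq_zero.mp h3 with h | h
  · omega
  · omega

lemma excep_sum_pent {M : ℕ} {S : Finset ℕ} (hS : excep S) (hsum : S.sum id = M) :
    ∃ j : ℤ, j * (3 * j + 1) = 2 * (M : ℤ) := by
  rcases hS with rfl | ⟨k, hk1, rfl | rfl⟩
  · refine ⟨0, ?_⟩
    simp at hsum
    simp [← hsum]
  · refine ⟨-(k : ℤ), ?_⟩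
    have h2 := sum_Icc_low k hk1
    rw [show (Finset.Icc k (2*k-1)).sum id = ∑ i ∈ Finset.Icc k (2*k-1), i from rfl] at hsum
    rw [hsum] at h2
    have hk3 : (1:ℕ) ≤ 3 * k := by omega
    zify [hk3] at h2
    linear_combination -h2
  · refine ⟨(k : ℤ), ?_⟩
    have h2 := sum_Icc_high k
    rw [show (Finset.Icc (k+1) (2*k)).sum id = ∑ i ∈ Finset.Icc (k+1) (2*k), i from rfl] at hsum
    rw [hsum] at h2
    zify at h2
    linear_combination -h2

lemma neg_one_pow_eq (n : ℕ) : ((-1 : ℤ))^n = if Even n then 1 else -1 := by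
  split_ifs with h
  · exact h.neg_one_pow
  · exact (Nat.not_even_iff_odd.mp h).neg_one_pow


lemma pent_val_low {k M : ℕ} (hk1 : 1 ≤ k) (hsum : (Finset.Icc k (2*k-1)).sum id = M) :
    (-(k : ℤ)) * (3 * (-(k : ℤ)) + 1) = 2 * (M : ℤ) := by
  have h2 := sum_Icc_low k hk1
  rw [show (Finset.Icc k (2*k-1)).sum id = ∑ i ∈ Finset.Icc k (2*k-1), i from rfl] at hsum
  rw [hsum] at h2
  have hk3 : (1:ℕ) ≤ 3 * k := by omega
  zify [hk3] at h2
  linear_combination -h2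

lemma pent_val_high {k M : ℕ} (hsum : (Finset.Icc (k+1) (2*k)).sum id = M) :
    ((k : ℤ)) * (3 * (k : ℤ) + 1) = 2 * (M : ℤ) := by
  have h2 := sum_Icc_high k
  rw [show (Finset.Icc (k+1) (2*k)).sum id = ∑ i ∈ Finset.Icc (k+1) (2*k), i from rfl] at hsum
  rw [hsum] at h2
  zify at h2
  linear_combination -h2

theorem franklin_key (M : ℕ) :
    (∑ S ∈ (Finset.Icc 1 M).powerset, if S.sum id = M then ((-1 : ℤ))^S.card else 0) =
    ∑ j ∈ Finset.Icc (-(M : ℤ)) (M : ℤ),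
      if j * (3 * j + 1) = 2 * (M : ℤ) then (if Even j then (1 : ℤ) else -1) else 0 := by
  classical
  set f : Finset ℕ → ℤ := fun S => if S.sum id = M then ((-1 : ℤ))^S.card else 0 with hf_def
  rw [← Finset.sum_filter_add_sum_filter_not (Finset.Icc 1 M).powerset excep f]
  -- non-exceptional part cancels
  have hnon : (∑ S ∈ (Finset.Icc 1 M).powerset.filter (fun S => ¬ excep S), f S) = 0 := by
    apply Finset.sum_involution
      (g := fun S _ => if S.sum id = M then fmap S else S)
    case hg₁ =>
      intro S hS
      rw [Finset.mem_filter, Finset.mem_powerset] at hS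
      by_cases hsum : S.sum id = M
      · have hne : S.Nonempty := Finset.nonempty_iff_ne_empty.mpr (fun hc => hS.2 (Or.inl hc))
        have h0 : 0 ∉ S := fun hc => by simpa using Finset.mem_Icc.mp (hS.1 hc)
        have hmain :
            0 ∉ fmap S ∧ (fmap S).Nonempty ∧ ¬ excep (fmap S) ∧
              (fmap S).sum id = S.sum id ∧
              ((fmap S).card + 1 = S.card ∨ S.card + 1 = (fmap S).card) := by
          by_cases hc : S.min' hne ≤ S.max' hne + 1 - runMin S hne
          · obtain ⟨a1, a2, a3, a4, a5, _⟩ := franklin_caseA S hne h0 hS.2 hc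
            exact ⟨a1, a2, a3, a4, Or.inl a5⟩
          · obtain ⟨a1, a2, a3, a4, a5, _⟩ := franklin_caseB S hne h0 hS.2 hc
            exact ⟨a1, a2, a3, a4, Or.inr a5⟩
        rw [if_pos hsum]
        simp only [hf_def, if_pos hsum, if_pos (hmain.2.2.2.1.trans hsum)]
        rcases hmain.2.2.2.2 with hcard | hcard
        · rw [← hcard]; ring
        · rw [← hcard]; ring
      · rw [if_neg hsum]
        simp only [hf_def]
        rw [if_neg hsum, add_zero]
    case hg₃ =>
      intro S hS hfS
      rw [Finset.mem_filter, Finset.mem_powerset] at hS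
      have hsum : S.sum id = M := by
        by_contra hc
        exact hfS (by simp only [hf_def]; exact if_neg hc)
      rw [if_pos hsum]
      have hne : S.Nonempty := Finset.nonempty_iff_ne_empty.mpr (fun hc => hS.2 (Or.inl hc))
      have h0 : 0 ∉ S := fun hc => by simpa using Finset.mem_Icc.mp (hS.1 hc)
      intro hc
      by_cases hcase : S.min' hne ≤ S.max' hne + 1 - runMin S hne
      · obtain ⟨_, _, _, _, a5, _⟩ := franklin_caseA S hne h0 hS.2 hcase
        rw [hc] at a5; omega
      · obtain ⟨_, _, _, _, a5, _⟩ := franklin_caseB S hne h0 hS.2 hcase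
        rw [hc] at a5; omega
    case g_mem =>
      intro S hS
      rw [Finset.mem_filter, Finset.mem_powerset] at hS
      by_cases hsum : S.sum id = M
      · have hne : S.Nonempty := Finset.nonempty_iff_ne_empty.mpr (fun hc => hS.2 (Or.inl hc))
        have h0 : 0 ∉ S := fun hc => by simpa using Finset.mem_Icc.mp (hS.1 hc)
        have hmain :
            0 ∉ fmap S ∧ (fmap S).Nonempty ∧ ¬ excep (fmap S) ∧
              (fmap S).sum id = S.sum id := by
          by_cases hc : S.min' hne ≤ S.max' hne + 1 - runMin S hne
          · obtain ⟨a1, a2, a3, a4, _, _⟩ := franklin_caseA S hne h0 hS.2 hc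
            exact ⟨a1, a2, a3, a4⟩
          · obtain ⟨a1, a2, a3, a4, _, _⟩ := franklin_caseB S hne h0 hS.2 hc
            exact ⟨a1, a2, a3, a4⟩
        rw [if_pos hsum, Finset.mem_filter, Finset.mem_powerset]
        refine ⟨fun x hx => Finset.mem_Icc.mpr ⟨?_, ?_⟩, hmain.2.2.1⟩
        · rcases Nat.eq_zero_or_pos x with h' | h'
          · exact absurd (h' ▸ hx) hmain.1
          · exact h'
        · calc x ≤ (fmap S).sum id := Finset.single_le_sum (fun i _ => Nat.zero_le i) hx
          _ = M := hmain.2.2.2.trans hsum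
      · rw [if_neg hsum, Finset.mem_filter, Finset.mem_powerset]
        exact ⟨hS.1, hS.2⟩
    case hg₄ =>
      intro S hS
      rw [Finset.mem_filter, Finset.mem_powerset] at hS
      by_cases hsum : S.sum id = M
      · have hne : S.Nonempty := Finset.nonempty_iff_ne_empty.mpr (fun hc => hS.2 (Or.inl hc))
        have h0 : 0 ∉ S := fun hc => by simpa using Finset.mem_Icc.mp (hS.1 hc)
        have hmain : (fmap S).sum id = S.sum id ∧ fmap (fmap S) = S := by
          by_cases hc : S.min' hne ≤ S.max' hne + 1 - runMin S hne
          · obtain ⟨_, _, _, a4, _, a6⟩ := franklin_caseA S hne h0 hS.2 hc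
            exact ⟨a4, a6⟩
          · obtain ⟨_, _, _, a4, _, a6⟩ := franklin_caseB S hne h0 hS.2 hc
            exact ⟨a4, a6⟩
        rw [if_pos hsum, if_pos (hmain.1.trans hsum)]
        exact hmain.2
      · rw [if_neg hsum, if_neg hsum]
  rw [hnon, add_zero]
  by_cases hex : ∃ j : ℤ, j * (3 * j + 1) = 2 * (M : ℤ)
  · obtain ⟨j0, hj0⟩ := hex
    rcases lt_trichotomy j0 0 with hneg | hzero | hpos
    · -- j0 ≤ -1 : exceptional set Icc k (2k-1)
      set k : ℕ := (-j0).toNat with hk_def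
      have hkj : (k : ℤ) = -j0 := Int.toNat_of_nonneg (by omega)
      have hk1 : 1 ≤ k := by omega
      have hk1' : (1 : ℤ) ≤ (k : ℤ) := by exact_mod_cast hk1
      have hM2 : 2 * (M : ℤ) = (k : ℤ) * (3 * (k : ℤ) - 1) := by
        rw [hkj]; linear_combination -hj0
      have hkM' : 2 * (k : ℤ) ≤ (M : ℤ) + 1 := by nlinarith
      have hM1' : 1 ≤ (M : ℤ) := by nlinarith
      have hkM : 2 * k ≤ M + 1 := by exact_mod_cast hkM'
      have hM1 : 1 ≤ M := by exact_mod_cast hM1'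
      set S0 : Finset ℕ := Finset.Icc k (2*k-1) with hS0_def
      have hS0sum : S0.sum id = M := by
        have hlow := sum_Icc_low k hk1
        zify [show (1:ℕ) ≤ 3 * k by omega] at hlow
        have : ((S0.sum id : ℕ) : ℤ) = (M : ℤ) := by
          have h2 : S0.sum id = ∑ i ∈ Finset.Icc k (2*k-1), i := rfl
          rw [h2]; push_cast; linarith
        exact_mod_cast this
      have hS0card : S0.card = k := by
        rw [hS0_def, Nat.card_Icc]; omega
      have hS0mem : S0 ∈ (Finset.Icc 1 M).powerset.filter excep := by
        rw [Finset.mem_filter, Finset.mem_powerset]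
        constructor
        · intro x hx
          rw [hS0_def, Finset.mem_Icc] at hx
          exact Finset.mem_Icc.mpr ⟨by omega, by omega⟩
        · exact Or.inr ⟨k, hk1, Or.inl rfl⟩
      rw [Finset.sum_eq_single_of_mem S0 hS0mem, Finset.sum_eq_single_of_mem j0
        (Finset.mem_Icc.mpr ⟨by omega, by omega⟩)]
      · simp only [hf_def, if_pos hS0sum, if_pos hj0, hS0card, neg_one_pow_eq]
        have : Even j0 ↔ Even k := by
          rw [← Int.even_coe_nat, hkj, even_neg]
        by_cases he : Even k
        · rw [if_pos he, if_pos (this.mpr he)]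
        · rw [if_neg he, if_neg (fun hc => he (this.mp hc))]
      · intro j hj hjne
        exact if_neg (fun hc => hjne (pent_unique hc hj0))
      · intro S hS hne
        rw [Finset.mem_filter] at hS
        simp only [hf_def]
        apply if_neg
        intro hc
        rcases hS.2 with rfl | ⟨k', hk1', rfl | rfl⟩
        · simp at hc; omega
        · have := pent_unique (pent_val_low hk1' hc) hj0
          have hkk : k' = k := by omega
          exact hne (by rw [hkk])
        · have := pent_unique (pent_val_high hc) hj0
          omega
    · -- j0 = 0 : M = 0
      have hM : M = 0 := by
        have : (2 : ℤ) * M = 0 := by rw [← hj0, hzero]; ring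
        omega
      subst hM
      rw [show (Finset.Icc 1 0) = ∅ from Finset.Icc_eq_empty (by omega),
        Finset.powerset_empty]
      rw [Finset.filter_singleton]
      rw [if_pos (show excep ∅ from Or.inl rfl)]
      rw [Finset.sum_singleton]
      rw [show (-(0:ℕ) : ℤ) = 0 by norm_num, show ((0:ℕ) : ℤ) = 0 by norm_num,
        Finset.Icc_self, Finset.sum_singleton]
      norm_num [hf_def]
    · -- j0 ≥ 1 : exceptional set Icc (k+1) (2k)
      set k : ℕ := j0.toNat with hk_def
      have hkj : (k : ℤ) = j0 := Int.toNat_of_nonneg (by omega)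
      have hk1 : 1 ≤ k := by omega
      have hk1' : (1 : ℤ) ≤ (k : ℤ) := by exact_mod_cast hk1
      have hM2 : 2 * (M : ℤ) = (k : ℤ) * (3 * (k : ℤ) + 1) := by
        rw [hkj]; linear_combination -hj0
      have hkM' : 2 * (k : ℤ) ≤ (M : ℤ) := by nlinarith
      have hkM : 2 * k ≤ M := by exact_mod_cast hkM'
      set S0 : Finset ℕ := Finset.Icc (k+1) (2*k) with hS0_def
      have hS0sum : S0.sum id = M := by
        have hhigh := sum_Icc_high k
        zify at hhigh
        have : ((S0.sum id : ℕ) : ℤ) = (M : ℤ) := by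
          have h2 : S0.sum id = ∑ i ∈ Finset.Icc (k+1) (2*k), i := rfl
          rw [h2]; push_cast; linarith
        exact_mod_cast this
      have hS0card : S0.card = k := by
        rw [hS0_def, Nat.card_Icc]; omega
      have hS0mem : S0 ∈ (Finset.Icc 1 M).powerset.filter excep := by
        rw [Finset.mem_filter, Finset.mem_powerset]
        constructor
        · intro x hx
          rw [hS0_def, Finset.mem_Icc] at hx
          exact Finset.mem_Icc.mpr ⟨by omega, by omega⟩
        · exact Or.inr ⟨k, hk1, Or.inr rfl⟩
      rw [Finset.sum_eq_single_of_mem S0 hS0mem, Finset.sum_eq_single_of_mem j0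
        (Finset.mem_Icc.mpr ⟨by omega, by omega⟩)]
      · simp only [hf_def, if_pos hS0sum, if_pos hj0, hS0card, neg_one_pow_eq]
        have : Even j0 ↔ Even k := by rw [← Int.even_coe_nat, hkj]
        by_cases he : Even k
        · rw [if_pos he, if_pos (this.mpr he)]
        · rw [if_neg he, if_neg (fun hc => he (this.mp hc))]
      · intro j hj hjne
        exact if_neg (fun hc => hjne (pent_unique hc hj0))
      · intro S hS hne
        rw [Finset.mem_filter] at hS
        simp only [hf_def]
        apply if_neg
        intro hc
        rcases hS.2 with rfl | ⟨k', hk1', rfl | rfl⟩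
        · simp at hc; omega
        · have := pent_unique (pent_val_low hk1' hc) hj0
          omega
        · have := pent_unique (pent_val_high hc) hj0
          have hkk : k' = k := by omega
          exact hne (by rw [hkk])
  · rw [Finset.sum_eq_zero, Finset.sum_eq_zero]
    · intro j _
      exact if_neg (fun hc => hex ⟨j, hc⟩)
    · intro S hS
      rw [Finset.mem_filter] at hS
      simp only [hf_def]
      exact if_neg (fun hc => hex (excep_sum_pent hS.2 hc))


lemma int_le_sq (j : ℤ) : j ≤ j^2 := by
  rcases le_or_gt j 0 with h | h
  · exact h.trans (sq_nonneg j)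
  · nlinarith

lemma int_neg_le_sq (j : ℤ) : -j ≤ j^2 := by
  rcases le_or_gt 0 j with h | h
  · exact (neg_nonpos.mpr h).trans (sq_nonneg j)
  · nlinarith

lemma prod_expand (N : ℕ) :
    (∏ n ∈ Finset.Icc 1 N, (1 - PowerSeries.X ^ (24 * n)) : PowerSeries ℤ) =
    ∑ T ∈ (Finset.Icc 1 N).powerset,
      ((-1 : ℤ))^T.card • (PowerSeries.X ^ (∑ n ∈ T, 24 * n) : PowerSeries ℤ) := by
  have h1 : ∀ n ∈ Finset.Icc 1 N,
      (1 - PowerSeries.X ^ (24 * n) : PowerSeries ℤ)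
        = (-(PowerSeries.X ^ (24 * n))) + 1 := by
    intro n _; ring
  rw [Finset.prod_congr rfl h1, Finset.prod_add]
  refine Finset.sum_congr rfl ?_
  intro T _
  rw [Finset.prod_const_one, mul_one]
  calc ∏ n ∈ T, (-(PowerSeries.X ^ (24 * n)) : PowerSeries ℤ)
      = ∏ n ∈ T, ((-1 : PowerSeries ℤ) * PowerSeries.X ^ (24 * n)) := by
        refine Finset.prod_congr rfl fun n _ => ?_; ring
    _ = (-1 : PowerSeries ℤ)^T.card * PowerSeries.X ^ (∑ n ∈ T, 24 * n) := by
        rw [Finset.prod_mul_distrib, Finset.prod_const, Finset.prod_pow_eq_pow_sum]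
    _ = ((-1 : ℤ))^T.card • (PowerSeries.X ^ (∑ n ∈ T, 24 * n) : PowerSeries ℤ) := by
        rw [zsmul_eq_mul]
        push_cast
        ring


/-- Euler's pentagonal number theorem in the form
`η₁(q) = q ∏_{n≥1} (1 - q^{24n}) = ∑_{n∈ℤ} (-1)^n q^{(6n+1)²}` as formal power
series over `ℤ`.  Stated coefficient-wise: for each `N`, the factors
`1 - q^{24n}` with `n > N` do not affect the coefficient of `q^N`, so the `N`-th
coefficient of the truncated product `q ∏_{n=1}^{N} (1 - q^{24n})` equals
`∑_{n∈ℤ, (6n+1)² = N} (-1)^n` (a sum with at most one term, and with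
`|n| ≤ N` for any solution). -/
theorem stmt3 :
    ∀ N : ℕ,
      PowerSeries.coeff (R := ℤ) N
        (PowerSeries.X * ∏ n ∈ Finset.Icc 1 N, (1 - PowerSeries.X ^ (24 * n))) =
      ∑ n ∈ Finset.Icc (-(N : ℤ)) (N : ℤ),
        if (6 * n + 1) ^ 2 = (N : ℤ) then (if Even n then 1 else -1) else 0 := by
  intro N
  cases N with
  | zero =>
    rw [PowerSeries.coeff_zero_eq_constantCoeff, map_mul, PowerSeries.constantCoeff_X,
      zero_mul]
    norm_num
  | succ N' =>
    rw [PowerSeries.coeff_succ_X_mul, prod_expand, map_sum]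
    have hterm : ∀ T ∈ (Finset.Icc 1 (N'+1)).powerset,
        (PowerSeries.coeff (R := ℤ) N')
            (((-1 : ℤ))^T.card • (PowerSeries.X ^ (∑ n ∈ T, 24 * n) : PowerSeries ℤ))
          = if (∑ n ∈ T, 24 * n) = N' then ((-1 : ℤ))^T.card else 0 := by
      intro T _
      rw [map_smul, PowerSeries.coeff_X_pow, smul_eq_mul]
      by_cases hc : (∑ n ∈ T, 24 * n) = N'
      · rw [if_pos hc, if_pos hc.symm, mul_one]
      · rw [if_neg hc, if_neg (fun h => hc h.symm), mul_zero]
    rw [Finset.sum_congr rfl hterm]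
    by_cases h24 : 24 ∣ N'
    · obtain ⟨M, rfl⟩ := h24
      have hMN : M ≤ 24 * M + 1 := by omega
      -- LHS : restrict to powerset of Icc 1 M and identify with franklin_key LHS
      have hL : (∑ T ∈ (Finset.Icc 1 (24*M+1)).powerset,
            if (∑ n ∈ T, 24 * n) = 24*M then ((-1 : ℤ))^T.card else 0)
          = ∑ T ∈ (Finset.Icc 1 M).powerset,
            if T.sum id = M then ((-1 : ℤ))^T.card else 0 := by
        rw [← Finset.sum_subset
          (Finset.powerset_mono.mpr (Finset.Icc_subset_Icc_right hMN))]
        · refine Finset.sum_congr rfl fun T _ => ?_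
          have : (∑ n ∈ T, 24 * n) = 24 * T.sum id := by
            rw [← Finset.mul_sum]; rfl
          rw [this]
          by_cases hc : T.sum id = M
          · rw [if_pos hc, if_pos (by omega)]
          · rw [if_neg hc, if_neg (by omega)]
        · intro T hT hnT
          apply if_neg
          intro hc
          apply hnT
          rw [Finset.mem_powerset] at hT ⊢
          intro x hx
          have hx1 := Finset.mem_Icc.mp (hT hx)
          have hxle : 24 * x ≤ 24 * M := by
            calc 24 * x ≤ ∑ n ∈ T, 24 * n :=
              Finset.single_le_sum (fun i _ => Nat.zero_le _) hx
            _ = 24 * M := hc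
          exact Finset.mem_Icc.mpr ⟨hx1.1, by omega⟩
      rw [hL, franklin_key M]
      -- RHS : restrict range and translate condition
      have hNZ : ((24*M+1 : ℕ) : ℤ) = 24*(M:ℤ)+1 := by push_cast; ring
      have hcond : ∀ j : ℤ, ((6*j+1)^2 = ((24*M+1 : ℕ) : ℤ)) ↔ (j*(3*j+1) = 2*(M:ℤ)) := by
        intro j
        rw [hNZ]
        constructor
        · intro hA
          have h12 : (12:ℤ) * (j*(3*j+1)) = 12 * (2*(M:ℤ)) := by linear_combination hA
          exact mul_left_cancel₀ (by norm_num) h12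
        · intro hB
          linear_combination 12 * hB
      rw [← Finset.sum_subset (Finset.Icc_subset_Icc
        (show -((24*M+1 : ℕ) : ℤ) ≤ -(M:ℤ) by push_cast; omega)
        (show ((M:ℕ) : ℤ) ≤ ((24*M+1 : ℕ) : ℤ) by push_cast; omega))]
      · exact Finset.sum_congr rfl fun j _ => if_congr (hcond j).symm rfl rfl
      · intro j hj hnj
        apply if_neg
        intro hc
        rw [hcond j] at hc
        have hj2 : j^2 ≤ (M:ℤ) := by nlinarith [int_le_sq j]
        have h1 := int_le_sq j
        have h2 := int_neg_le_sq j
        rw [Finset.mem_Icc] at hj hnj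
        push_neg at hnj
        omega
    · -- 24 ∤ N' : both sides vanish
      rw [Finset.sum_eq_zero, Finset.sum_eq_zero]
      · intro j _
        apply if_neg
        intro hc
        apply h24
        have hN : ((N' : ℤ)) = 12 * (3*j^2 + j) := by push_cast at hc ⊢; linear_combination -hc
        rcases Int.even_or_odd j with ⟨m, hm⟩ | ⟨m, hm⟩
        · have : (24:ℤ) ∣ (N' : ℤ) := ⟨6*m^2+m, by rw [hN, hm]; ring⟩
          exact_mod_cast this
        · have : (24:ℤ) ∣ (N' : ℤ) := ⟨6*m^2+7*m+2, by rw [hN, hm]; ring⟩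
          exact_mod_cast this
      · intro T _
        apply if_neg
        intro hc
        apply h24
        refine ⟨T.sum id, ?_⟩
        rw [← hc, ← Finset.mul_sum]
        rfl
end

section
/- Let X ≥ 3 and let a₂ be a positive integer with at most log X prime factors, all of whose prime factors counted in the product are ≥ (log Y)^{100} for some Y ≥ 3. Then ∏_{p | a₂, (log Y)^{100} ≤ p ≤ X^{1/4}} (1 - 1/p)^{-1} ≪ max(1, log log X / log log Y). -/
open Finset

open Finset

private lemma cast_div_ge {n p : ℕ} (hp : 0 < p) : (n:ℝ)/p - 1 ≤ ((n/p : ℕ) : ℝ) := by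
  have h := Nat.div_add_mod n p
  have h2 := Nat.mod_lt n hp
  have hp' : (0:ℝ) < p := by exact_mod_cast hp
  have : (n:ℝ) = p * ((n/p : ℕ) : ℝ) + ((n % p : ℕ) : ℝ) := by exact_mod_cast h.symm
  have h2' : ((n % p : ℕ) : ℝ) < p := by exact_mod_cast h2
  rw [div_sub_one (ne_of_gt hp'), div_le_iff₀ hp']
  nlinarith

private lemma mertens1 (n : ℕ) (hn : 1 ≤ n) :
    ∑ p ∈ (Finset.range (n+1)).filter Nat.Prime, Real.log p / p ≤
      Real.log n + Real.log 4 := by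
  set s := (Finset.range (n+1)).filter Nat.Prime with hs
  have hmem : ∀ p ∈ s, p.Prime ∧ p ≤ n := by
    intro p hp
    rw [hs, Finset.mem_filter, Finset.mem_range] at hp
    exact ⟨hp.2, by omega⟩
  have key : ∀ p ∈ s, (n / p : ℕ) ≤ (n.factorial).factorization p := by
    intro p hp
    obtain ⟨hpp, hpn⟩ := hmem p hp
    rw [← Nat.Prime.pow_dvd_iff_le_factorization hpp n.factorial_ne_zero]
    rw [Nat.Prime.pow_dvd_factorial_iff hpp (show Nat.log p n < n+1 from
      lt_of_le_of_lt (Nat.log_le_self p n) (Nat.lt_succ_self n))]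
    have h1 : n / p ^ 1 ≤ ∑ i ∈ Finset.Ico 1 (n+1), n / p ^ i :=
      Finset.single_le_sum (f := fun i => n / p ^ i)
        (fun i _ => Nat.zero_le _) (Finset.mem_Ico.2 ⟨le_refl 1, by omega⟩)
    simpa using h1
  have hsub : s ⊆ (n.factorial).primeFactors := by
    intro p hp
    obtain ⟨hpp, hpn⟩ := hmem p hp
    exact Nat.mem_primeFactors.2 ⟨hpp, (Nat.Prime.dvd_factorial hpp).2 hpn,
      n.factorial_ne_zero⟩
  have hlogfact : ∑ p ∈ s, ((n / p : ℕ) : ℝ) * Real.log p ≤ Real.log n.factorial := by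
    calc ∑ p ∈ s, ((n / p : ℕ) : ℝ) * Real.log p
        ≤ ∑ p ∈ s, ((n.factorial).factorization p : ℝ) * Real.log p := by
          apply Finset.sum_le_sum
          intro p hp
          have hpp := (hmem p hp).1
          have hc : ((n / p : ℕ) : ℝ) ≤ ((n.factorial).factorization p : ℝ) := by
            exact_mod_cast key p hp
          exact mul_le_mul_of_nonneg_right hc
            (Real.log_nonneg (by exact_mod_cast hpp.one_lt.le))
      _ ≤ ∑ p ∈ (n.factorial).primeFactors, ((n.factorial).factorization p : ℝ) * Real.log p :=
          Finset.sum_le_sum_of_subset_of_nonneg hsub (fun p hp _ => by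
            have hpp := Nat.prime_of_mem_primeFactors hp
            have : 0 ≤ Real.log p := Real.log_nonneg (by exact_mod_cast hpp.one_lt.le)
            positivity)
      _ = Real.log n.factorial := by
          conv_rhs => rw [← Nat.factorization_prod_pow_eq_self n.factorial_ne_zero,
            Nat.prod_factorization_eq_prod_primeFactors]
          push_cast
          rw [Real.log_prod (fun p hp => by
            have h0 : (0:ℝ) < p := by
              exact_mod_cast (Nat.prime_of_mem_primeFactors hp).pos
            positivity)]
          refine (Finset.sum_congr rfl fun p hp => ?_).symm
          push_cast
          rw [Real.log_pow]
  have hfactle : Real.log n.factorial ≤ n * Real.log n := by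
    calc Real.log n.factorial ≤ Real.log ((n ^ n : ℕ) : ℝ) := by
          apply Real.log_le_log (by positivity)
          exact_mod_cast n.factorial_le_pow
      _ = n * Real.log n := by push_cast; rw [Real.log_pow]
  have htheta : ∑ p ∈ s, Real.log p ≤ n * Real.log 4 := by
    have h4 : ((primorial n : ℕ) : ℝ) ≤ (((4:ℕ) ^ n : ℕ) : ℝ) := by
      exact_mod_cast primorial_le_4_pow n
    have hprim : 0 < primorial n := Finset.prod_pos (fun p hp => (Finset.mem_filter.1 hp).2.pos)
    have hlog4 := Real.log_le_log (by exact_mod_cast hprim) h4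
    rw [primorial] at hlog4
    push_cast at hlog4
    rw [Real.log_prod (fun p hp => by
      have := (Finset.mem_filter.1 hp).2
      have : (0:ℝ) < p := by exact_mod_cast this.pos
      positivity), Real.log_pow] at hlog4
    calc ∑ p ∈ s, Real.log p ≤ (n : ℝ) * Real.log 4 := by
          rw [hs]
          convert hlog4 using 2 <;> norm_num
      _ = n * Real.log 4 := rfl
  have hmain : (n:ℝ) * ∑ p ∈ s, Real.log p / p ≤ n * Real.log n + n * Real.log 4 := by
    rw [Finset.mul_sum]
    calc ∑ p ∈ s, (n:ℝ) * (Real.log p / p)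
        ≤ ∑ p ∈ s, (((n / p : ℕ) : ℝ) + 1) * Real.log p := by
          apply Finset.sum_le_sum
          intro p hp
          obtain ⟨hpp, _⟩ := hmem p hp
          have hp0 : (0:ℝ) < p := by exact_mod_cast hpp.pos
          have hlogp : 0 ≤ Real.log p := Real.log_nonneg (by exact_mod_cast hpp.one_lt.le)
          have hcd := cast_div_ge (n := n) hpp.pos
          calc (n:ℝ) * (Real.log p / p) = ((n:ℝ)/p) * Real.log p := by ring
            _ ≤ (((n / p : ℕ) : ℝ) + 1) * Real.log p := by nlinarith
      _ = ∑ p ∈ s, ((n / p : ℕ) : ℝ) * Real.log p + ∑ p ∈ s, Real.log p := by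
          rw [← Finset.sum_add_distrib]; exact Finset.sum_congr rfl fun p hp => by ring
      _ ≤ n * Real.log n + n * Real.log 4 :=
          add_le_add (hlogfact.trans hfactle) htheta
  have hn0 : (0:ℝ) < n := by exact_mod_cast hn
  nlinarith [hmain]

open Finset

private lemma telescope_Ico (f : ℕ → ℝ) {N M : ℕ} (h : N ≤ M) :
    ∑ n ∈ Finset.Ico N M, (f (n+1) - f n) = f M - f N := by
  induction M, h using Nat.le_induction with
  | base => simp
  | succ M hM ih => rw [Finset.sum_Ico_succ_top hM, ih]; ring

private lemma abel_sum (w g : ℕ → ℝ) {N M : ℕ} (h : N ≤ M) :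
    ∑ n ∈ Finset.Ico (N+1) (M+1), w n * g n =
      (∑ n ∈ Finset.Ico (N+1) (M+1), w n) * g M +
      ∑ n ∈ Finset.Ico N M, (∑ i ∈ Finset.Ico (N+1) (n+1), w i) * (g n - g (n+1)) := by
  induction M, h using Nat.le_induction with
  | base => simp
  | succ M hM ih =>
    rw [Finset.sum_Ico_succ_top (by omega : N + 1 ≤ M + 1),
        Finset.sum_Ico_succ_top (by omega : N + 1 ≤ M + 1),
        Finset.sum_Ico_succ_top (by omega : N ≤ M), ih]
    ring

 
open Finset

private lemma one_le_log {n : ℕ} (hn : 3 ≤ n) : 1 ≤ Real.log n := by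
  have h3 : (3:ℝ) ≤ n := by exact_mod_cast hn
  rw [Real.le_log_iff_exp_le (by linarith)]
  calc Real.exp 1 ≤ 2.7182818286 := Real.exp_one_lt_d9.le
    _ ≤ (3:ℝ) := by norm_num
    _ ≤ n := h3

private lemma log4_le : Real.log 4 ≤ 1.39 := by
  have : (4:ℝ) = 2^2 := by norm_num
  rw [this, Real.log_pow]
  have := Real.log_two_lt_d9
  push_cast
  nlinarith

private lemma mertens2 {N M : ℕ} (hN : 3 ≤ N) (hNM : N ≤ M) :
    ∑ p ∈ (Finset.Ico (N+1) (M+1)).filter Nat.Prime, 1 / (p:ℝ) ≤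
      Real.log (Real.log M) - Real.log (Real.log N) + 4 := by
  set w : ℕ → ℝ := fun n => if n.Prime then Real.log n / n else 0 with hw
  set g : ℕ → ℝ := fun n => (Real.log n)⁻¹ with hg
  have hwnn : ∀ n, 0 ≤ w n := by
    intro n
    rw [hw]
    dsimp only
    split
    · rename_i h
      have : (1:ℝ) ≤ n := by exact_mod_cast h.one_lt.le
      have : 0 ≤ Real.log n := Real.log_nonneg this
      positivity
    · exact le_refl 0
  -- Mertens 1 bound for partial sums of w over the interval
  have hW : ∀ t : ℕ, 1 ≤ t → ∑ i ∈ Finset.Ico (N+1) (t+1), w i ≤ Real.log t + Real.log 4 := by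
    intro t ht
    calc ∑ i ∈ Finset.Ico (N+1) (t+1), w i ≤ ∑ i ∈ Finset.range (t+1), w i :=
          Finset.sum_le_sum_of_subset_of_nonneg
            (by intro i hi; rw [Finset.mem_range]; exact (Finset.mem_Ico.1 hi).2)
            (fun i _ _ => hwnn i)
      _ = ∑ p ∈ (Finset.range (t+1)).filter Nat.Prime, Real.log p / p := by
          rw [Finset.sum_filter]
      _ ≤ Real.log t + Real.log 4 := mertens1 t ht
  -- rewrite LHS
  have hLHS : ∑ p ∈ (Finset.Ico (N+1) (M+1)).filter Nat.Prime, 1 / (p:ℝ) =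
      ∑ n ∈ Finset.Ico (N+1) (M+1), w n * g n := by
    rw [Finset.sum_filter]
    refine Finset.sum_congr rfl fun n hn => ?_
    have hn4 : 4 ≤ n := by have := (Finset.mem_Ico.1 hn).1; omega
    by_cases hp : n.Prime
    · simp only [hp, if_true, hw, hg]
      have hlog : Real.log n ≠ 0 := by
        have := one_le_log (show 3 ≤ n by omega); linarith
      have hn0 : (n:ℝ) ≠ 0 := by positivity
      field_simp
    · simp only [hp, if_false, hw]
      simp [hp]
  rw [hLHS, abel_sum w g hNM]
  -- bound first term
  have hgM : 0 ≤ g M ∧ g M ≤ 1 := by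
    have h1 := one_le_log (show 3 ≤ M by omega)
    constructor
    · rw [hg]; dsimp only; positivity
    · rw [hg]; dsimp only
      rw [inv_le_one_iff₀]; right; exact h1
  have hT1 : (∑ n ∈ Finset.Ico (N+1) (M+1), w n) * g M ≤ 1 + Real.log 4 := by
    have hWM := hW M (by omega)
    have hWnn : 0 ≤ ∑ n ∈ Finset.Ico (N+1) (M+1), w n :=
      Finset.sum_nonneg fun i _ => hwnn i
    have h1 := one_le_log (show 3 ≤ M by omega)
    calc (∑ n ∈ Finset.Ico (N+1) (M+1), w n) * g M
        ≤ (Real.log M + Real.log 4) * g M := mul_le_mul_of_nonneg_right hWM hgM.1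
      _ = Real.log M * g M + Real.log 4 * g M := by ring
      _ ≤ 1 + Real.log 4 := by
          have e1 : Real.log M * g M = 1 := by
            rw [hg]; dsimp only; field_simp
          have e2 : Real.log 4 * g M ≤ Real.log 4 := by
            have h4 : 0 ≤ Real.log 4 := Real.log_nonneg (by norm_num)
            nlinarith [hgM.2, hgM.1]
          linarith
  -- bound second sum termwise
  have hT2 : ∑ n ∈ Finset.Ico N M, (∑ i ∈ Finset.Ico (N+1) (n+1), w i) * (g n - g (n+1)) ≤
      (Real.log (Real.log M) - Real.log (Real.log N)) + Real.log 4 * 1 := by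
    have key : ∀ n ∈ Finset.Ico N M,
        (∑ i ∈ Finset.Ico (N+1) (n+1), w i) * (g n - g (n+1)) ≤
          (Real.log (Real.log (n+1)) - Real.log (Real.log n)) +
            Real.log 4 * (g n - g (n+1)) := by
      intro n hn
      have hn3 : 3 ≤ n := le_trans hN (Finset.mem_Ico.1 hn).1
      have hb := one_le_log hn3
      have ha := one_le_log (show 3 ≤ n+1 by omega)
      have hba : Real.log n ≤ Real.log (n+1) := by
        apply Real.log_le_log (by positivity)
        exact_mod_cast Nat.le_succ n
      have hgg : 0 ≤ g n - g (n+1) := by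
        rw [hg]; dsimp only
        push_cast
        have := inv_anti₀ (by linarith : (0:ℝ) < Real.log n) hba
        linarith
      have hWn : ∑ i ∈ Finset.Ico (N+1) (n+1), w i ≤ Real.log n + Real.log 4 :=
        hW n (by omega)
      have step1 : (∑ i ∈ Finset.Ico (N+1) (n+1), w i) * (g n - g (n+1)) ≤
          (Real.log n + Real.log 4) * (g n - g (n+1)) :=
        mul_le_mul_of_nonneg_right hWn hgg
      have step2 : Real.log n * (g n - g (n+1)) ≤
          Real.log (Real.log (n+1)) - Real.log (Real.log n) := by
        set b := Real.log n
        set a := Real.log (n+1)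
        have hbpos : (0:ℝ) < b := by linarith
        have hapos : (0:ℝ) < a := by linarith
        have e1 : b * (g n - g (n+1)) = 1 - b / a := by
          rw [hg]; dsimp only
          push_cast
          rw [mul_sub]
          rw [mul_inv_cancel₀ (by linarith : b ≠ 0)]
          rw [div_eq_mul_inv]
        have e2 : Real.log (b / a) ≤ b / a - 1 := Real.log_le_sub_one_of_pos (by positivity)
        rw [Real.log_div (by linarith) (by linarith)] at e2
        rw [e1]
        linarith
      calc (∑ i ∈ Finset.Ico (N+1) (n+1), w i) * (g n - g (n+1))
          ≤ (Real.log n + Real.log 4) * (g n - g (n+1)) := step1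
        _ = Real.log n * (g n - g (n+1)) + Real.log 4 * (g n - g (n+1)) := by ring
        _ ≤ (Real.log (Real.log (n+1)) - Real.log (Real.log n)) +
              Real.log 4 * (g n - g (n+1)) := by
            push_cast
            push_cast at step2
            linarith
    calc ∑ n ∈ Finset.Ico N M, (∑ i ∈ Finset.Ico (N+1) (n+1), w i) * (g n - g (n+1))
        ≤ ∑ n ∈ Finset.Ico N M, ((Real.log (Real.log (n+1)) - Real.log (Real.log n)) +
            Real.log 4 * (g n - g (n+1))) := Finset.sum_le_sum key
      _ = (Real.log (Real.log M) - Real.log (Real.log N)) +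
            Real.log 4 * (g N - g M) := by
          have htel := telescope_Ico (fun n => Real.log (Real.log n)) hNM
          push_cast at htel
          rw [Finset.sum_add_distrib, htel, ← Finset.mul_sum]
          have : ∑ n ∈ Finset.Ico N M, (g n - g (n+1)) = g N - g M := by
            have := telescope_Ico (fun n => -(g n)) hNM
            simp only [neg_sub, sub_neg_eq_add] at this
            calc ∑ n ∈ Finset.Ico N M, (g n - g (n+1))
                = ∑ n ∈ Finset.Ico N M, (-(g (n+1)) - -(g n)) := by
                  refine Finset.sum_congr rfl fun n _ => by ring
              _ = -(g M) - -(g N) := telescope_Ico (fun n => -(g n)) hNM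
              _ = g N - g M := by ring
          rw [this]
      _ ≤ (Real.log (Real.log M) - Real.log (Real.log N)) + Real.log 4 * 1 := by
          have h4 : 0 ≤ Real.log 4 := Real.log_nonneg (by norm_num)
          have hgN : g N ≤ 1 := by
            rw [hg]; dsimp only
            rw [inv_le_one_iff₀]; right; exact one_le_log hN
          have hgMnn : 0 ≤ g M := hgM.1
          nlinarith
  have h4 := log4_le
  linarith [hT1, hT2]

open Finset

private lemma interval_prod {N M : ℕ} (hN : 3 ≤ N) (hNM : N ≤ M) :
    ∏ p ∈ (Finset.Ico (N+1) (M+1)).filter Nat.Prime, (1 - 1/(p:ℝ))⁻¹ ≤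
      Real.exp 6 * (Real.log M / Real.log N) := by
  set t := (Finset.Ico (N+1) (M+1)).filter Nat.Prime with ht
  have hp4 : ∀ p ∈ t, 4 ≤ p := by
    intro p hp
    have := (Finset.mem_Ico.1 (Finset.mem_filter.1 hp).1).1
    omega
  have hfac : ∀ p ∈ t, (0:ℝ) < 1 - 1/(p:ℝ) := by
    intro p hp
    have h4 : (4:ℝ) ≤ p := by exact_mod_cast hp4 p hp
    have : 1/(p:ℝ) ≤ 1/4 := by
      apply div_le_div_of_nonneg_left (by norm_num) (by norm_num) h4 |>.trans_eq (by norm_num)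
    linarith
  have hprodpos : (0:ℝ) < ∏ p ∈ t, (1 - 1/(p:ℝ))⁻¹ :=
    Finset.prod_pos fun p hp => inv_pos.2 (hfac p hp)
  -- log of product
  have hlog : Real.log (∏ p ∈ t, (1 - 1/(p:ℝ))⁻¹) ≤
      Real.log (Real.log M) - Real.log (Real.log N) + 5 := by
    rw [Real.log_prod (fun p hp => ne_of_gt (inv_pos.2 (hfac p hp)))]
    have hterm : ∀ p ∈ t, Real.log ((1 - 1/(p:ℝ))⁻¹) ≤ 1/(p:ℝ) + 2/(p:ℝ)^2 := by
      intro p hp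
      have h4 : (4:ℝ) ≤ p := by exact_mod_cast hp4 p hp
      have hx : (0:ℝ) < 1/(p:ℝ) := by positivity
      have hx4 : 1/(p:ℝ) ≤ 1/4 := by
        rw [div_le_div_iff₀ (by linarith) (by norm_num)]; linarith
      set x := 1/(p:ℝ)
      have h1x : (0:ℝ) < 1 - x := by linarith
      calc Real.log ((1-x)⁻¹) ≤ (1-x)⁻¹ - 1 :=
            Real.log_le_sub_one_of_pos (by positivity)
        _ = x / (1-x) := by field_simp; ring
        _ ≤ x + 2*x^2 := by
            rw [div_le_iff₀ h1x]; nlinarith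
        _ = 1/(p:ℝ) + 2/(p:ℝ)^2 := by
            have : x^2 = 1/(p:ℝ)^2 := by rw [div_pow]; norm_num
            rw [this]; ring
    calc ∑ p ∈ t, Real.log ((1 - 1/(p:ℝ))⁻¹) ≤ ∑ p ∈ t, (1/(p:ℝ) + 2/(p:ℝ)^2) :=
          Finset.sum_le_sum hterm
      _ = (∑ p ∈ t, 1/(p:ℝ)) + ∑ p ∈ t, 2/(p:ℝ)^2 := Finset.sum_add_distrib
      _ ≤ (Real.log (Real.log M) - Real.log (Real.log N) + 4) + 1 := by
          refine add_le_add (mertens2 hN hNM) ?_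
          calc ∑ p ∈ t, 2/(p:ℝ)^2 ≤ ∑ n ∈ Finset.Ico (N+1) (M+1), 2/(n:ℝ)^2 :=
                Finset.sum_le_sum_of_subset_of_nonneg (Finset.filter_subset _ _)
                  (fun n hn _ => by positivity)
            _ ≤ ∑ n ∈ Finset.Ico (N+1) (M+1),
                  ((fun m => -2/((m:ℝ)-1)) (n+1) - (fun m => -2/((m:ℝ)-1)) n) := by
                apply Finset.sum_le_sum
                intro n hn
                have hn4 : 4 ≤ n := by
                  have := (Finset.mem_Ico.1 hn).1; omega
                have hn4' : (4:ℝ) ≤ n := by exact_mod_cast hn4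
                dsimp only
                push_cast
                have h1 : (0:ℝ) < (n:ℝ) - 1 := by linarith
                have e : -2/((n:ℝ)+1-1) - -2/((n:ℝ)-1) = 2/(((n:ℝ)-1)*n) := by
                  rw [add_sub_cancel_right]
                  field_simp
                  ring
                rw [e]
                gcongr
                nlinarith
            _ = -2/((M+1:ℝ)-1) - -2/((N+1:ℝ)-1) := by
                have := telescope_Ico (fun m => -2/((m:ℝ)-1)) (show N+1 ≤ M+1 by omega)
                push_cast at this ⊢
                exact this
            _ ≤ 1 := by
                have hN3 : (3:ℝ) ≤ N := by exact_mod_cast hN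
                have hM3 : (3:ℝ) ≤ M := by exact_mod_cast le_trans hN hNM
                have : -2/((M+1:ℝ)-1) ≤ 0 := by
                  apply div_nonpos_of_nonpos_of_nonneg <;> linarith
                have h2 : (2:ℝ)/((N+1:ℝ)-1) ≤ 1 := by
                  rw [div_le_one (by linarith)]; linarith
                have e : -(-2/((N+1:ℝ)-1)) = 2/((N+1:ℝ)-1) := by ring
                linarith [this, h2]
      _ = Real.log (Real.log M) - Real.log (Real.log N) + 5 := by ring
  -- exponentiate
  have hlogM : 0 < Real.log M := lt_of_lt_of_le one_pos (one_le_log (le_trans hN hNM))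
  have hlogN : 0 < Real.log N := lt_of_lt_of_le one_pos (one_le_log hN)
  calc ∏ p ∈ t, (1 - 1/(p:ℝ))⁻¹ = Real.exp (Real.log (∏ p ∈ t, (1 - 1/(p:ℝ))⁻¹)) :=
        (Real.exp_log hprodpos).symm
    _ ≤ Real.exp (Real.log (Real.log M) - Real.log (Real.log N) + 5) := Real.exp_le_exp.2 hlog
    _ ≤ Real.exp 6 * (Real.log M / Real.log N) := by
        rw [Real.exp_add, Real.exp_sub, Real.exp_log hlogM, Real.exp_log hlogN]
        rw [mul_comm]
        exact mul_le_mul_of_nonneg_right (Real.exp_le_exp.2 (by norm_num)) (by positivity)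

open Finset

private lemma exp_ub {x : ℝ} (h0 : 0 ≤ x) (h1 : x < 1) : Real.exp x ≤ (1-x)⁻¹ := by
  have h2 : 1 - x ≤ (Real.exp x)⁻¹ := by
    have := Real.add_one_le_exp (-x)
    rw [Real.exp_neg] at this
    linarith
  have h3 : (0:ℝ) < 1 - x := by linarith
  calc Real.exp x = ((Real.exp x)⁻¹)⁻¹ := by rw [inv_inv]
    _ ≤ (1-x)⁻¹ := inv_anti₀ h3 h2

private lemma log3_ge : (1.09:ℝ) ≤ Real.log 3 := by
  rw [Real.le_log_iff_exp_le (by norm_num)]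
  have e : (1.09:ℝ) = 1 + 0.09 := by norm_num
  rw [e, Real.exp_add]
  have h1 : Real.exp 1 ≤ 2.7182818286 := Real.exp_one_lt_d9.le
  have h2 : Real.exp 0.09 ≤ (1-0.09)⁻¹ := exp_ub (by norm_num) (by norm_num)
  calc Real.exp 1 * Real.exp 0.09 ≤ 2.7182818286 * (1-0.09:ℝ)⁻¹ := by
        exact mul_le_mul h1 h2 (Real.exp_pos _).le (by norm_num)
    _ ≤ 3 := by norm_num
private lemma log109_ge : (0.08:ℝ) ≤ Real.log 1.09 := by
  rw [Real.le_log_iff_exp_le (by norm_num)]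
  calc Real.exp 0.08 ≤ (1-0.08:ℝ)⁻¹ := exp_ub (by norm_num) (by norm_num)
    _ ≤ 1.09 := by norm_num
private lemma exp8_le : Real.exp 8 ≤ 3000 := by
  have e : (8:ℝ) = (8:ℕ) * 1 := by norm_num
  rw [e, Real.exp_nat_mul]
  calc Real.exp 1 ^ (8:ℕ) ≤ 2.7182818286 ^ (8:ℕ) :=
        pow_le_pow_left₀ (Real.exp_pos _).le Real.exp_one_lt_d9.le 8
    _ ≤ 3000 := by norm_num
private lemma log2_le : Real.log 2 ≤ 0.7 := le_trans Real.log_two_lt_d9.le (by norm_num)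
private lemma log4_le' : Real.log 4 ≤ 1.39 := by
  have : (4:ℝ) = 2^2 := by norm_num
  rw [this, Real.log_pow]
  have := Real.log_two_lt_d9
  push_cast
  nlinarith
private lemma fac_pos {p : ℕ} (hp : 2 ≤ p) : (0:ℝ) < 1 - 1/(p:ℝ) := by
  have h : (2:ℝ) ≤ p := by exact_mod_cast hp
  have : 1/(p:ℝ) ≤ 1/2 := by rw [div_le_div_iff₀ (by linarith) (by norm_num)]; linarith
  linarith
private lemma one_le_fac {p : ℕ} (hp : 2 ≤ p) : (1:ℝ) ≤ (1 - 1/(p:ℝ))⁻¹ := by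
  have h := fac_pos hp
  have h2 : 1 - 1/(p:ℝ) ≤ 1 := by
    have : (0:ℝ) < p := by positivity
    have : 0 ≤ 1/(p:ℝ) := by positivity
    linarith
  calc (1:ℝ) = 1⁻¹ := by norm_num
    _ ≤ (1 - 1/(p:ℝ))⁻¹ := inv_anti₀ h h2

private lemma prod_le_prod_subset_one_le {s t : Finset ℕ} (h : s ⊆ t) (f : ℕ → ℝ)
    (h0 : ∀ i ∈ t, 0 ≤ f i) (h1 : ∀ i ∈ t, i ∉ s → 1 ≤ f i) :
    ∏ i ∈ s, f i ≤ ∏ i ∈ t, f i := by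
  rw [← Finset.prod_sdiff h]
  have h2 : (1:ℝ) ≤ ∏ i ∈ t \ s, f i := by
    calc (1:ℝ) = ∏ _i ∈ t \ s, (1:ℝ) := (Finset.prod_const_one).symm
      _ ≤ ∏ i ∈ t \ s, f i := Finset.prod_le_prod (fun i _ => zero_le_one)
          (fun i hi => h1 i (Finset.mem_sdiff.1 hi).1 (Finset.mem_sdiff.1 hi).2)
  have h3 : 0 ≤ ∏ i ∈ s, f i := Finset.prod_nonneg (fun i hi => h0 i (h hi))
  calc ∏ i ∈ s, f i = 1 * ∏ i ∈ s, f i := (one_mul _).symm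
    _ ≤ (∏ i ∈ t \ s, f i) * ∏ i ∈ s, f i := mul_le_mul_of_nonneg_right h2 h3

set_option maxHeartbeats 1000000 in
open Finset in
/-- Let `X ≥ 3`, `Y ≥ 3`, and let `a₂` be a positive integer with at most
`log X` prime factors.  Then
`∏_{p | a₂, (log Y)^100 ≤ p ≤ X^{1/4}} (1 - 1/p)⁻¹ ≪ max(1, log log X / log log Y)`,
with an absolute implied constant. -/
theorem stmt8 :
    ∃ C > 0, ∀ X Y : ℝ, 3 ≤ X → 3 ≤ Y → ∀ a₂ : ℕ, 0 < a₂ →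
      (a₂.primeFactors.card : ℝ) ≤ Real.log X →
      ∏ p ∈ a₂.primeFactors.filter
          (fun p : ℕ => (Real.log Y) ^ (100 : ℕ) ≤ (p : ℝ) ∧
            (p : ℝ) ≤ X ^ ((1 : ℝ) / 4)),
        (1 - 1 / (p : ℝ))⁻¹ ≤
      C * max 1 (Real.log (Real.log X) / Real.log (Real.log Y)) := by
  refine ⟨4000, by norm_num, ?_⟩
  intro X Y hX hY a₂ ha₂ hcard
  set F := a₂.primeFactors.filter
      (fun p : ℕ => (Real.log Y) ^ (100 : ℕ) ≤ (p : ℝ) ∧ (p : ℝ) ≤ X ^ ((1 : ℝ) / 4)) with hF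
  set P : ℝ := (Real.log Y) ^ (100 : ℕ) with hPdef
  set llX := Real.log (Real.log X) with hllX
  set llY := Real.log (Real.log Y) with hllY
  have hFprime : ∀ p ∈ F, p.Prime := fun p hp =>
    Nat.prime_of_mem_primeFactors (Finset.mem_filter.1 hp).1
  -- basic numerics
  have hlogY : (1.09:ℝ) ≤ Real.log Y :=
    le_trans log3_ge (Real.log_le_log (by norm_num) hY)
  have hllY008 : (0.08:ℝ) ≤ llY := by
    rw [hllY]
    exact le_trans log109_ge (Real.log_le_log (by norm_num) hlogY)
  have hlogX : (1.09:ℝ) ≤ Real.log X :=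
    le_trans log3_ge (Real.log_le_log (by norm_num) hX)
  have hllX008 : (0.08:ℝ) ≤ llX := by
    rw [hllX]
    exact le_trans log109_ge (Real.log_le_log (by norm_num) hlogX)
  have hP : (4001:ℝ) ≤ P := by
    calc (4001:ℝ) ≤ 1.09 ^ (100:ℕ) := by norm_num
      _ ≤ P := pow_le_pow_left₀ (by norm_num) hlogY 100
  set N : ℕ := ⌈P⌉₊ - 1 with hNdef
  have hceil : 4001 ≤ ⌈P⌉₊ := by
    have : (4000:ℕ) < ⌈P⌉₊ := Nat.lt_ceil.2 (by push_cast; linarith)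
    omega
  have hN1 : N + 1 = ⌈P⌉₊ := by omega
  have hN4000 : 4000 ≤ N := by omega
  have hN3 : 3 ≤ N := by omega
  set k' : ℕ := ⌈Real.log X⌉₊ with hk'def
  set M : ℕ := N + k' with hMdef
  have hNM : N ≤ M := Nat.le_add_right _ _
  have hNcast : P - 1 ≤ (N:ℝ) := by
    have h1 := Nat.le_ceil P
    have h2 : (N:ℝ) = (⌈P⌉₊ : ℝ) - 1 := by
      rw [hNdef]
      have : (1:ℕ) ≤ ⌈P⌉₊ := by omega
      push_cast [this]
      ring
    linarith
  have hlogN8 : 8 ≤ Real.log N := by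
    rw [Real.le_log_iff_exp_le (by exact_mod_cast Nat.lt_of_lt_of_le (by norm_num) hN4000)]
    calc Real.exp 8 ≤ 3000 := exp8_le
      _ ≤ (N:ℝ) := by exact_mod_cast le_trans (by norm_num) hN4000
  have hlogNP : 99 * llY ≤ Real.log N := by
    have hlogP : Real.log P = 100 * llY := by
      rw [hPdef, Real.log_pow, hllY]; push_cast; ring
    have hlogN_ge : Real.log (P - 1) ≤ Real.log N :=
      Real.log_le_log (by linarith) hNcast
    have hgap : Real.log P - Real.log (P-1) ≤ 1/2000 := by
      have h0 : (0:ℝ) < P - 1 := by linarith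
      have e : Real.log P - Real.log (P-1) = Real.log (P/(P-1)) := by
        rw [Real.log_div (by linarith) (by linarith)]
      rw [e]
      have h2 := Real.log_le_sub_one_of_pos (show (0:ℝ) < P/(P-1) from
        div_pos (by linarith) (by linarith))
      have h3 : P/(P-1) - 1 = 1/(P-1) := by field_simp; ring
      have h4 : 1/(P-1) ≤ 1/2000 := by
        rw [div_le_div_iff₀ h0 (by norm_num)]; linarith
      linarith
    linarith
  -- split the product
  rw [← Finset.prod_filter_mul_prod_filter_not F (fun p => p ≤ M)]
  -- part 1 : small primes
  have hpart1 : ∏ p ∈ F.filter (fun p => p ≤ M), (1 - 1/(p:ℝ))⁻¹ ≤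
      Real.exp 6 * (Real.log M / Real.log N) := by
    refine le_trans (prod_le_prod_subset_one_le ?_ _ ?_ ?_) (interval_prod hN3 hNM)
    · intro p hp
      obtain ⟨hpF, hpM⟩ := Finset.mem_filter.1 hp
      obtain ⟨hpa, hPp, _⟩ := Finset.mem_filter.1 hpF
      refine Finset.mem_filter.2 ⟨Finset.mem_Ico.2 ⟨?_, by omega⟩,
        Nat.prime_of_mem_primeFactors hpa⟩
      rw [hN1]
      exact Nat.ceil_le.2 hPp
    · intro p hp
      have := (Finset.mem_Ico.1 (Finset.mem_filter.1 hp).1).1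
      exact (inv_pos.2 (fac_pos (by omega))).le
    · intro p hp _
      have := (Finset.mem_Ico.1 (Finset.mem_filter.1 hp).1).1
      exact one_le_fac (by omega)
  -- part 2 : large primes
  have hcard2 : (F.filter (fun p => ¬ p ≤ M)).card ≤ k' := by
    have h1 : (F.filter (fun p => ¬ p ≤ M)).card ≤ a₂.primeFactors.card :=
      Finset.card_le_card (le_trans (Finset.filter_subset _ _) (Finset.filter_subset _ _))
    have h2 : ((a₂.primeFactors.card : ℕ) : ℝ) ≤ (k' : ℝ) :=
      le_trans hcard (Nat.le_ceil _)
    have h3 : a₂.primeFactors.card ≤ k' := by exact_mod_cast h2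
    omega
  have hMpos : (0:ℝ) < M := by
    have : 4000 ≤ M := le_trans hN4000 hNM
    exact_mod_cast Nat.lt_of_lt_of_le (by norm_num) this
  have hpart2 : ∏ p ∈ F.filter (fun p => ¬ p ≤ M), (1 - 1/(p:ℝ))⁻¹ ≤ Real.exp 2 := by
    calc ∏ p ∈ F.filter (fun p => ¬ p ≤ M), (1 - 1/(p:ℝ))⁻¹
        ≤ ∏ _p ∈ F.filter (fun p => ¬ p ≤ M), Real.exp (2/(M:ℝ)) := by
          apply Finset.prod_le_prod
          · intro p hp
            have hpp := hFprime p (Finset.mem_filter.1 hp).1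
            exact (inv_pos.2 (fac_pos hpp.two_le)).le
          · intro p hp
            have hpM : M < p := by
              have := (Finset.mem_filter.1 hp).2
              omega
            have hpp := hFprime p (Finset.mem_filter.1 hp).1
            have hppos : (0:ℝ) < p := by exact_mod_cast hpp.pos
            have hMp : (M:ℝ) ≤ (p:ℝ) := by exact_mod_cast hpM.le
            have hfacpos := fac_pos hpp.two_le
            have step1 : (1 - 1/(p:ℝ))⁻¹ ≤ 1 + 2/(p:ℝ) := by
              rw [inv_le_iff_one_le_mul₀ hfacpos]
              have h2p : (2:ℝ) ≤ p := by exact_mod_cast hpp.two_le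
              have e : (1 + 2/(p:ℝ)) * (1 - 1/(p:ℝ)) = 1 + 1/(p:ℝ) - 2/(p:ℝ)^2 := by
                field_simp
                ring
              rw [e]
              have : 2/(p:ℝ)^2 ≤ 1/(p:ℝ) := by
                rw [div_le_div_iff₀ (by positivity) hppos]
                nlinarith
              linarith
            have step2 : 1 + 2/(p:ℝ) ≤ 1 + 2/(M:ℝ) := by
              have : 2/(p:ℝ) ≤ 2/(M:ℝ) := by
                apply div_le_div_of_nonneg_left (by norm_num) hMpos hMp
              linarith
            have step3 : 1 + 2/(M:ℝ) ≤ Real.exp (2/(M:ℝ)) := by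
              have := Real.add_one_le_exp (2/(M:ℝ))
              linarith
            linarith
      _ = Real.exp (2/(M:ℝ)) ^ (F.filter (fun p => ¬ p ≤ M)).card :=
          Finset.prod_const _
      _ = Real.exp ((F.filter (fun p => ¬ p ≤ M)).card * (2/(M:ℝ))) :=
          (Real.exp_nat_mul _ _).symm
      _ ≤ Real.exp 2 := by
          apply Real.exp_le_exp.2
          have hc : ((F.filter (fun p => ¬ p ≤ M)).card : ℝ) ≤ (M:ℝ) := by
            have : (F.filter (fun p => ¬ p ≤ M)).card ≤ M := le_trans hcard2 (by omega)
            exact_mod_cast this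
          have hcnn : (0:ℝ) ≤ ((F.filter (fun p => ¬ p ≤ M)).card : ℝ) := by positivity
          rw [div_eq_mul_inv, ← mul_assoc]
          calc ((F.filter (fun p => ¬ p ≤ M)).card : ℝ) * 2 * (M:ℝ)⁻¹
              ≤ (M:ℝ) * 2 * (M:ℝ)⁻¹ := by
                apply mul_le_mul_of_nonneg_right (by nlinarith) (by positivity)
            _ = 2 := by field_simp
  -- combine
  have hratio_pos : 0 < Real.log M / Real.log N := by
    have : 0 < Real.log M := lt_of_lt_of_le (by norm_num) (le_trans hlogN8
      (Real.log_le_log (by exact_mod_cast Nat.lt_of_lt_of_le (by norm_num) hN4000)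
        (by exact_mod_cast hNM)))
    have : 0 < Real.log N := lt_of_lt_of_le (by norm_num) hlogN8
    positivity
  have h2nn : 0 ≤ ∏ p ∈ F.filter (fun p => ¬ p ≤ M), (1 - 1/(p:ℝ))⁻¹ :=
    Finset.prod_nonneg fun p hp =>
      (inv_pos.2 (fac_pos (hFprime p (Finset.mem_filter.1 hp).1).two_le)).le
  have htot : (∏ p ∈ F.filter (fun p => p ≤ M), (1 - 1/(p:ℝ))⁻¹) *
      ∏ p ∈ F.filter (fun p => ¬ p ≤ M), (1 - 1/(p:ℝ))⁻¹ ≤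
      3000 * (Real.log M / Real.log N) := by
    calc (∏ p ∈ F.filter (fun p => p ≤ M), (1 - 1/(p:ℝ))⁻¹) *
        ∏ p ∈ F.filter (fun p => ¬ p ≤ M), (1 - 1/(p:ℝ))⁻¹
        ≤ (Real.exp 6 * (Real.log M / Real.log N)) * Real.exp 2 :=
          mul_le_mul hpart1 hpart2 h2nn (by positivity)
      _ = (Real.exp 6 * Real.exp 2) * (Real.log M / Real.log N) := by ring
      _ = Real.exp 8 * (Real.log M / Real.log N) := by rw [← Real.exp_add]; norm_num
      _ ≤ 3000 * (Real.log M / Real.log N) :=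
          mul_le_mul_of_nonneg_right exp8_le hratio_pos.le
  have hmax1 : (1:ℝ) ≤ max 1 (llX/llY) := le_max_left _ _
  have hNpos : (0:ℝ) < Real.log N := by linarith
  have hfinal : 3000 * (Real.log M / Real.log N) ≤ 4000 * max 1 (llX / llY) := by
    by_cases hcase : k' ≤ N
    · have hk'N : (k':ℝ) ≤ (N:ℝ) := by exact_mod_cast hcase
      have hM2N : (M:ℝ) ≤ 2*(N:ℝ) := by
        have e : (M:ℝ) = (N:ℝ) + (k':ℝ) := by rw [hMdef]; push_cast; ring
        linarith
      have hN0 : (0:ℝ) < (N:ℝ) := by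
        exact_mod_cast Nat.lt_of_lt_of_le (by norm_num) hN4000
      have hlogM : Real.log M ≤ Real.log 2 + Real.log N := by
        calc Real.log M ≤ Real.log (2*(N:ℝ)) := Real.log_le_log hMpos hM2N
          _ = Real.log 2 + Real.log N := Real.log_mul (by norm_num) (by linarith)
      have hratio : Real.log M / Real.log N ≤ 1.1 := by
        rw [div_le_iff₀ hNpos]
        nlinarith [log2_le, hlogN8]
      calc 3000 * (Real.log M / Real.log N) ≤ 3000 * 1.1 := by nlinarith
        _ ≤ 4000 * 1 := by norm_num
        _ ≤ 4000 * max 1 (llX/llY) := by nlinarith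
    · push_neg at hcase
      have hK0 : (0:ℝ) ≤ Real.log X := by linarith
      have hNK : (N:ℝ) ≤ Real.log X := by
        have h1 : (N:ℝ) + 1 ≤ (k':ℝ) := by exact_mod_cast hcase
        have h2 : (k':ℝ) < Real.log X + 1 := Nat.ceil_lt_add_one hK0
        linarith
      have hN0 : (0:ℝ) < (N:ℝ) := by
        exact_mod_cast Nat.lt_of_lt_of_le (by norm_num) hN4000
      have hllX8 : 8 ≤ llX := by
        rw [hllX]
        calc (8:ℝ) ≤ Real.log N := hlogN8
          _ ≤ Real.log (Real.log X) := Real.log_le_log hN0 hNK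
      have hX4000 : (4000:ℝ) ≤ Real.log X := by
        have : (4000:ℝ) ≤ (N:ℝ) := by exact_mod_cast hN4000
        linarith
      have hM4K : (M:ℝ) ≤ 4 * Real.log X := by
        have e : (M:ℝ) = (N:ℝ) + (k':ℝ) := by rw [hMdef]; push_cast; ring
        have h2 : (k':ℝ) < Real.log X + 1 := Nat.ceil_lt_add_one hK0
        linarith
      have hlogM : Real.log M ≤ Real.log 4 + llX := by
        calc Real.log M ≤ Real.log (4*Real.log X) := Real.log_le_log hMpos hM4K
          _ = Real.log 4 + llX := by
              rw [Real.log_mul (by norm_num) (by linarith : Real.log X ≠ 0), hllX]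
      have hlogM2 : Real.log M ≤ 1.2 * llX := by nlinarith [log4_le', hllX8]
      have hllYpos : (0:ℝ) < llY := by linarith
      have hratio : Real.log M / Real.log N ≤ (1.2*llX)/(99*llY) :=
        div_le_div₀ (by nlinarith) hlogM2 (by linarith) hlogNP
      have hq : (0:ℝ) ≤ llX/llY := div_nonneg (by linarith) (by linarith)
      have e2 : (1.2*llX)/(99*llY) = (1.2/99)*(llX/llY) := mul_div_mul_comm _ _ _ _
      calc 3000 * (Real.log M / Real.log N) ≤ 3000 * ((1.2*llX)/(99*llY)) := by nlinarith
        _ = (3600/99) * (llX/llY) := by rw [e2]; ring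
        _ ≤ 4000 * (llX/llY) := by nlinarith
        _ ≤ 4000 * max 1 (llX/llY) :=
            mul_le_mul_of_nonneg_left (le_max_right _ _) (by norm_num)
  exact le_trans htot hfinal
end
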